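/- arXiv:1808.05001 — 3 statements merged into one kernel-verified Lean document; each statement's English description precedes it below -/
import Mathlib

section
/- Let n ≥ 3, let g : Fin n → Fin n → ℝ be a symmetric positive definite bilinear form and Ric : Fin n → Fin n → ℝ a symmetric bilinear form. Suppose the tensor R defined by R i j k l = (1/(n-1)) * (g i k * Ric j l - g i l * Ric j k) satisfies the pair symmetry R i j k l = R k l i j for all indices. Then there exists κ : ℝ such that Ric i j = (n-1) * κ * g i j for all i, j. -/
/-!
Pair symmetry of `R i j k l = g i k * Ric j l - g i l * Ric j k` says, after using the symmetry of
`g` and `Ric`, that `g i l * Ric j k = g j k * Ric i l`. Taking `i = l = a` for an index with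
`g a a > 0` (a diagonal entry of a positive definite form) gives `Ric = (Ric a a / g a a) • g`.
-/

section

variable {ι R : Type*}

lemma mul_eq_mul_of_pair_symm [CommRing R] {g Ric : ι → ι → R}
    (hg : ∀ i j, g i j = g j i) (hRic : ∀ i j, Ric i j = Ric j i)
    (hpair : ∀ i j k l, g i k * Ric j l - g i l * Ric j k = g k i * Ric l j - g k j * Ric l i)
    (i j k l : ι) : g i l * Ric j k = g j k * Ric i l := by
  have h := hpair i j k l
  rw [hg k i, hRic l j, hg k j, hRic l i] at h
  linear_combination -h

lemma diag_pos_of_quadForm_pos [Fintype ι] [DecidableEq ι] [CommRing R] [PartialOrder R]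
    [Nontrivial R] {g : ι → ι → R}
    (hg : ∀ v : ι → R, v ≠ 0 → 0 < ∑ i, ∑ j, g i j * v i * v j) (a : ι) : 0 < g a a := by
  simpa [Pi.single_apply, ite_mul, mul_ite] using hg (Pi.single a 1) (by simp)

lemma exists_eq_mul_of_mul_eq_mul [Field R] {g Ric : ι → ι → R} {a : ι} (ha : g a a ≠ 0)
    (h : ∀ j k, g a a * Ric j k = g j k * Ric a a) : ∃ c : R, ∀ j k, Ric j k = c * g j k :=
  ⟨Ric a a / g a a, fun j k => by
    rw [div_mul_eq_mul_div, eq_div_iff ha, mul_comm, h, mul_comm]⟩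

end

theorem stmt_3 (n : ℕ) (hn : 3 ≤ n) (g Ric : Fin n → Fin n → ℝ)
    (hg_symm : ∀ i j, g i j = g j i)
    (hg_pos : ∀ v : Fin n → ℝ, v ≠ 0 → 0 < ∑ i, ∑ j, g i j * v i * v j)
    (hRic_symm : ∀ i j, Ric i j = Ric j i)
    (hpair : ∀ i j k l : Fin n,
      (1 / ((n : ℝ) - 1)) * (g i k * Ric j l - g i l * Ric j k)
        = (1 / ((n : ℝ) - 1)) * (g k i * Ric l j - g k j * Ric l i)) :
    ∃ κ : ℝ, ∀ i j, Ric i j = ((n : ℝ) - 1) * κ * g i j := by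
  have hn1 : (n : ℝ) - 1 ≠ 0 := by
    have : (3 : ℝ) ≤ n := by exact_mod_cast hn
    linarith
  have hcross := mul_eq_mul_of_pair_symm hg_symm hRic_symm fun i j k l =>
    mul_left_cancel₀ (one_div_ne_zero hn1) (hpair i j k l)
  let a : Fin n := ⟨0, by omega⟩
  obtain ⟨c, hc⟩ := exists_eq_mul_of_mul_eq_mul (diag_pos_of_quadForm_pos hg_pos a).ne'
    fun j k => hcross a j k a
  refine ⟨c / ((n : ℝ) - 1), fun i j => ?_⟩
  rw [hc, mul_div_cancel₀ _ hn1]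
end

section
/- Let n ≥ 2, F : (ℝⁿ \ {0}) → ℝ smooth positive and positively 1-homogeneous, κ : (ℝⁿ \ {0}) → ℝ smooth and positively 0-homogeneous, and set R i j (y) = κ(y) * (F(y)² * δ i j - (1/2) * ∂(F²)/∂y^j (y) * y^i). Then the identity (1/2) * ∂(∑_l R l l)/∂y^j (y) = - ∑_m ∂(R m j)/∂y^m (y) holds for all j and all y ≠ 0 if and only if ∂κ/∂y^j = 0 for all j. -/
open Filter Topology

private lemma aux_euler {n k : ℕ} {g : (Fin n → ℝ) → ℝ} {y : Fin n → ℝ}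
    (hdiff : DifferentiableAt ℝ g y)
    (hhom : ∀ t : ℝ, 0 < t → g (t • y) = t ^ k * g y) :
    fderiv ℝ g y y = k * g y := by
  have hc : HasDerivAt (fun t : ℝ => t • y) y 1 := by
    simpa using (hasDerivAt_id (1 : ℝ)).smul_const y
  have hd : HasFDerivAt g (fderiv ℝ g y) ((1 : ℝ) • y) := by
    simpa using hdiff.hasFDerivAt
  have h1 : HasDerivAt (fun t : ℝ => g (t • y)) (fderiv ℝ g y y) 1 :=
    hd.comp_hasDerivAt 1 hc
  have h2 : HasDerivAt (fun t : ℝ => t ^ k * g y) ((k : ℝ) * g y) 1 := by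
    simpa using (hasDerivAt_pow k (1 : ℝ)).mul_const (g y)
  have hev : (fun t : ℝ => g (t • y)) =ᶠ[𝓝 (1 : ℝ)] fun t => t ^ k * g y := by
    filter_upwards [isOpen_Ioi.mem_nhds (show (1 : ℝ) ∈ Set.Ioi 0 by norm_num)] with t ht
    exact hhom t ht
  exact h1.unique (h2.congr_of_eventuallyEq hev)

private lemma aux_scale {n k : ℕ} {g : (Fin n → ℝ) → ℝ}
    (hdiff : ∀ z : Fin n → ℝ, z ≠ 0 → DifferentiableAt ℝ g z)
    (hhom : ∀ t : ℝ, 0 < t → ∀ z : Fin n → ℝ, z ≠ 0 → g (t • z) = t ^ k * g z)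
    {t : ℝ} (ht : 0 < t) {z : Fin n → ℝ} (hz : z ≠ 0) (v : Fin n → ℝ) :
    t * fderiv ℝ g (t • z) v = t ^ k * fderiv ℝ g z v := by
  have htz : t • z ≠ 0 := smul_ne_zero ht.ne' hz
  have hin : HasFDerivAt (fun w : Fin n → ℝ => t • w)
      (t • ContinuousLinearMap.id ℝ (Fin n → ℝ)) z := (hasFDerivAt_id z).const_smul t
  have h1 : HasFDerivAt (fun w => g (t • w))
      ((fderiv ℝ g (t • z)).comp (t • ContinuousLinearMap.id ℝ (Fin n → ℝ))) z :=
    (hdiff _ htz).hasFDerivAt.comp z hin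
  have hev : (fun w => g (t • w)) =ᶠ[𝓝 z] fun w => t ^ k * g w := by
    filter_upwards [isOpen_ne.mem_nhds hz] with w hw
    exact hhom t ht w hw
  have h2 : HasFDerivAt (fun w => g (t • w)) ((t ^ k) • fderiv ℝ g z) z :=
    ((hdiff z hz).hasFDerivAt.const_mul (t ^ k)).congr_of_eventuallyEq hev
  have h3 := congrFun (congrArg DFunLike.coe (h1.unique h2)) v
  simpa [ContinuousLinearMap.comp_apply, ContinuousLinearMap.smul_apply,
    map_smul, smul_eq_mul] using h3

private lemma aux_sum {n : ℕ} (L : (Fin n → ℝ) →L[ℝ] ℝ) (y : Fin n → ℝ) :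
    ∑ m, L (Pi.single m 1) * y m = L y := by
  have key : ∀ m : Fin n, L (Pi.single m 1) * y m = L (Pi.single m (y m)) := by
    intro m
    have hsm : y m • (Pi.single m 1 : Fin n → ℝ) = Pi.single m (y m) := by
      ext x
      by_cases h : x = m
      · subst h; simp
      · simp [Pi.single_eq_of_ne h]
    rw [← hsm, L.map_smul, smul_eq_mul, mul_comm]
  rw [Finset.sum_congr rfl (fun m _ => key m), ← map_sum]
  congr 1
  exact Finset.univ_sum_single y

theorem stmt_10 (n : ℕ) (hn : 2 ≤ n) (F κ : (Fin n → ℝ) → ℝ)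
    (hF : ContDiffOn ℝ (⊤ : ℕ∞) F {y : Fin n → ℝ | y ≠ 0})
    (hFpos : ∀ y : Fin n → ℝ, y ≠ 0 → 0 < F y)
    (hFhom : ∀ t : ℝ, 0 < t → ∀ y : Fin n → ℝ, y ≠ 0 → F (t • y) = t * F y)
    (hκ : ContDiffOn ℝ (⊤ : ℕ∞) κ {y : Fin n → ℝ | y ≠ 0})
    (hκhom : ∀ t : ℝ, 0 < t → ∀ y : Fin n → ℝ, y ≠ 0 → κ (t • y) = κ y)
    (R : (Fin n → ℝ) → Fin n → Fin n → ℝ)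
    (hRdef : ∀ (y : Fin n → ℝ) (i j : Fin n),
      R y i j = κ y * ((F y) ^ 2 * (if i = j then (1:ℝ) else 0)
        - (1 / 2) * fderiv ℝ (fun w => (F w) ^ 2) y (Pi.single j 1) * y i)) :
    (∀ y : Fin n → ℝ, y ≠ 0 → ∀ j : Fin n,
        (1 / 2) * fderiv ℝ (fun z => ∑ l, R z l l) y (Pi.single j 1)
          = - ∑ m, fderiv ℝ (fun z => R z m j) y (Pi.single m 1))
      ↔ (∀ y : Fin n → ℝ, y ≠ 0 → ∀ j : Fin n, fderiv ℝ κ y (Pi.single j 1) = 0) := by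
  classical
  have hSopen : IsOpen {y : Fin n → ℝ | y ≠ 0} := isOpen_ne
  set E : (Fin n → ℝ) → ℝ := fun w => (F w) ^ 2 with hEdef
  have hE : ContDiffOn ℝ (⊤ : ℕ∞) E {y : Fin n → ℝ | y ≠ 0} := hF.pow 2
  have hEdiff : ∀ z : Fin n → ℝ, z ≠ 0 → DifferentiableAt ℝ E z := fun z hz =>
    (hE.contDiffAt (hSopen.mem_nhds hz)).differentiableAt (by simp)
  have hκdiff : ∀ z : Fin n → ℝ, z ≠ 0 → DifferentiableAt ℝ κ z := fun z hz =>
    (hκ.contDiffAt (hSopen.mem_nhds hz)).differentiableAt (by simp)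
  have hEhom : ∀ t : ℝ, 0 < t → ∀ z : Fin n → ℝ, z ≠ 0 → E (t • z) = t ^ 2 * E z := by
    intro t ht z hz
    simp only [hEdef]
    rw [hFhom t ht z hz]; ring
  have hRdef' : ∀ (z : Fin n → ℝ) (i j : Fin n),
      R z i j = κ z * (E z * (if i = j then (1:ℝ) else 0)
        - 1 / 2 * fderiv ℝ E z (Pi.single j 1) * z i) := fun z i j => hRdef z i j
  have hgC : ContDiffOn ℝ (⊤ : ℕ∞) (fun z => fderiv ℝ E z) {y : Fin n → ℝ | y ≠ 0} :=
    hE.fderiv_of_isOpen hSopen (by simp)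
  have hgdiff : ∀ (j : Fin n) (z : Fin n → ℝ), z ≠ 0 →
      DifferentiableAt ℝ (fun w => fderiv ℝ E w (Pi.single j 1)) z := by
    intro j z hz
    have h1 : DifferentiableAt ℝ (fun w => fderiv ℝ E w) z :=
      (hgC.contDiffAt (hSopen.mem_nhds hz)).differentiableAt (by simp)
    exact h1.clm_apply (differentiableAt_const _)
  have hghom : ∀ (j : Fin n) (t : ℝ), 0 < t → ∀ z : Fin n → ℝ, z ≠ 0 →
      fderiv ℝ E (t • z) (Pi.single j 1) = t ^ 1 * fderiv ℝ E z (Pi.single j 1) := by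
    intro j t ht z hz
    have h := aux_scale (k := 2) hEdiff hEhom ht hz (Pi.single j 1)
    have h2 : t * fderiv ℝ E (t • z) (Pi.single j 1)
        = t * (t ^ 1 * fderiv ℝ E z (Pi.single j 1)) := by rw [h]; ring
    exact mul_left_cancel₀ ht.ne' h2
  have eulerE : ∀ z : Fin n → ℝ, z ≠ 0 → fderiv ℝ E z z = 2 * E z := by
    intro z hz
    have := aux_euler (k := 2) (hEdiff z hz) (fun t ht => hEhom t ht z hz)
    simpa using this
  have eulerκ : ∀ z : Fin n → ℝ, z ≠ 0 → fderiv ℝ κ z z = 0 := by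
    intro z hz
    have := aux_euler (k := 0) (hκdiff z hz) (fun t ht => by
      simpa using hκhom t ht z hz)
    simpa using this
  have eulerg : ∀ (j : Fin n) (z : Fin n → ℝ), z ≠ 0 →
      fderiv ℝ (fun w => fderiv ℝ E w (Pi.single j 1)) z z = fderiv ℝ E z (Pi.single j 1) := by
    intro j z hz
    have := aux_euler (k := 1) (hgdiff j z hz) (fun t ht => hghom j t ht z hz)
    simpa using this
  -- trace identity
  have trace_eq : ∀ z : Fin n → ℝ, z ≠ 0 → ∑ l, R z l l = ((n : ℝ) - 1) * (κ z * E z) := by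
    intro z hz
    have hsum : ∑ l, fderiv ℝ E z (Pi.single l 1) * z l = 2 * E z := by
      rw [aux_sum (fderiv ℝ E z) z, eulerE z hz]
    calc ∑ l, R z l l
        = ∑ l, (κ z * E z - κ z * (1/2) * (fderiv ℝ E z (Pi.single l 1) * z l)) := by
          refine Finset.sum_congr rfl fun l _ => ?_
          rw [hRdef' z l l]
          simp only [eq_self_iff_true, if_true]
          ring
      _ = (n : ℝ) * (κ z * E z) - κ z * (1/2) * (2 * E z) := by
          rw [Finset.sum_sub_distrib]
          congr 1
          · rw [Finset.sum_const, Finset.card_univ, Fintype.card_fin, nsmul_eq_mul]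
          · rw [← Finset.mul_sum, hsum]
      _ = ((n : ℝ) - 1) * (κ z * E z) := by ring
  -- LHS value
  have LHSval : ∀ y : Fin n → ℝ, y ≠ 0 → ∀ j : Fin n,
      fderiv ℝ (fun z => ∑ l, R z l l) y (Pi.single j 1)
        = ((n : ℝ) - 1) * (fderiv ℝ κ y (Pi.single j 1) * E y
            + κ y * fderiv ℝ E y (Pi.single j 1)) := by
    intro y hy j
    have hev : (fun z => ∑ l, R z l l) =ᶠ[𝓝 y] fun z => ((n : ℝ) - 1) * (κ z * E z) := by
      filter_upwards [hSopen.mem_nhds hy] with z hz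
      exact trace_eq z hz
    rw [hev.fderiv_eq]
    have h1 : HasFDerivAt (fun z => ((n : ℝ) - 1) * (κ z * E z))
        (((n : ℝ) - 1) • (κ y • fderiv ℝ E y + E y • fderiv ℝ κ y)) y :=
      ((hκdiff y hy).hasFDerivAt.mul (hEdiff y hy).hasFDerivAt).const_mul _
    rw [h1.fderiv]
    simp only [ContinuousLinearMap.smul_apply, ContinuousLinearMap.add_apply, smul_eq_mul]
    ring
  -- RHS value
  have RHSval : ∀ y : Fin n → ℝ, y ≠ 0 → ∀ j : Fin n,
      ∑ m, fderiv ℝ (fun z => R z m j) y (Pi.single m 1)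
        = fderiv ℝ κ y (Pi.single j 1) * E y
            + ((1 - (n : ℝ)) / 2) * (κ y * fderiv ℝ E y (Pi.single j 1)) := by
    intro y hy j
    set Dκ : (Fin n → ℝ) →L[ℝ] ℝ := fderiv ℝ κ y with hDκ
    set DE : (Fin n → ℝ) →L[ℝ] ℝ := fderiv ℝ E y with hDE
    set g : (Fin n → ℝ) → ℝ := fun w => fderiv ℝ E w (Pi.single j 1) with hgdef
    set Dg : (Fin n → ℝ) →L[ℝ] ℝ := fderiv ℝ g y with hDgdef
    have hgy : g y = DE (Pi.single j 1) := rfl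
    have hterm : ∀ m : Fin n, fderiv ℝ (fun z => R z m j) y (Pi.single m 1)
        = Dκ (Pi.single m 1) * (E y * (if m = j then (1:ℝ) else 0) - 1/2 * g y * y m)
          + κ y * (DE (Pi.single m 1) * (if m = j then (1:ℝ) else 0)
            - (1/2 * g y + y m * (1/2 * Dg (Pi.single m 1)))) := by
      intro m
      have hfun : (fun z => R z m j) = fun z =>
          κ z * (E z * (if m = j then (1:ℝ) else 0) - 1/2 * g z * z m) :=
        funext fun z => hRdef' z m j
      have hproj : HasFDerivAt (fun z : Fin n → ℝ => z m)
          ((ContinuousLinearMap.proj m : (Fin n → ℝ) →L[ℝ] ℝ)) y := by exact hasFDerivAt_apply (𝕜 := ℝ) m y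
      have hg' : HasFDerivAt g Dg y := (hgdiff j y hy).hasFDerivAt
      have hE' : HasFDerivAt E DE y := (hEdiff y hy).hasFDerivAt
      have hκ' : HasFDerivAt κ Dκ y := (hκdiff y hy).hasFDerivAt
      have hinner : HasFDerivAt
          (fun z => E z * (if m = j then (1:ℝ) else 0) - 1/2 * g z * z m)
          ((if m = j then (1:ℝ) else 0) • DE
            - ((1/2 * g y) • (ContinuousLinearMap.proj m : (Fin n → ℝ) →L[ℝ] ℝ) + y m • ((1/2 : ℝ) • Dg))) y :=
        (hE'.mul_const _).sub ((hg'.const_mul (1/2)).mul hproj)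
      have hL : HasFDerivAt (fun z => R z m j)
          (κ y • ((if m = j then (1:ℝ) else 0) • DE
              - ((1/2 * g y) • (ContinuousLinearMap.proj m : (Fin n → ℝ) →L[ℝ] ℝ) + y m • ((1/2 : ℝ) • Dg)))
            + (E y * (if m = j then (1:ℝ) else 0) - 1/2 * g y * y m) • Dκ) y := by
        rw [hfun]; exact hκ'.mul hinner
      rw [hL.fderiv]
      simp only [ContinuousLinearMap.add_apply, ContinuousLinearMap.smul_apply,
        ContinuousLinearMap.sub_apply, ContinuousLinearMap.proj_apply,
        Pi.single_eq_same, smul_eq_mul]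
      ring
    have hsum1 : ∑ m, Dκ (Pi.single m 1) * y m = 0 := by
      rw [aux_sum Dκ y]; exact eulerκ y hy
    have hsum2 : ∑ m, Dg (Pi.single m 1) * y m = DE (Pi.single j 1) := by
      rw [aux_sum Dg y]; exact eulerg j y hy
    have hsplit : ∀ m : Fin n,
        Dκ (Pi.single m 1) * (E y * (if m = j then (1:ℝ) else 0) - 1/2 * g y * y m)
          + κ y * (DE (Pi.single m 1) * (if m = j then (1:ℝ) else 0)
            - (1/2 * g y + y m * (1/2 * Dg (Pi.single m 1))))
        = (if m = j then E y * Dκ (Pi.single m 1) + κ y * DE (Pi.single m 1) else 0)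
            - (1/2 * g y) * (Dκ (Pi.single m 1) * y m)
            - κ y * (1/2 * g y)
            - (κ y * (1/2)) * (Dg (Pi.single m 1) * y m) := by
      intro m
      by_cases h : m = j
      · subst h
        simp only [eq_self_iff_true, if_true]
        ring
      · simp only [if_neg h]
        ring
    have s1 : ∑ m, (if m = j then E y * Dκ (Pi.single m 1) + κ y * DE (Pi.single m 1) else 0)
        = E y * Dκ (Pi.single j 1) + κ y * DE (Pi.single j 1) := by
      rw [Finset.sum_ite_eq' Finset.univ j
        (fun m => E y * Dκ (Pi.single m 1) + κ y * DE (Pi.single m 1))]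
      simp
    have s2 : ∑ m, (1/2 * g y) * (Dκ (Pi.single m 1) * y m) = 0 := by
      rw [← Finset.mul_sum, hsum1, mul_zero]
    have s3 : ∑ _m : Fin n, κ y * (1/2 * g y) = (n : ℝ) * (κ y * (1/2 * g y)) := by
      rw [Finset.sum_const, Finset.card_univ, Fintype.card_fin, nsmul_eq_mul]
    have s4 : ∑ m, (κ y * (1/2)) * (Dg (Pi.single m 1) * y m)
        = (κ y * (1/2)) * DE (Pi.single j 1) := by
      rw [← Finset.mul_sum, hsum2]
    calc ∑ m, fderiv ℝ (fun z => R z m j) y (Pi.single m 1)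
        = ∑ m, ((if m = j then E y * Dκ (Pi.single m 1) + κ y * DE (Pi.single m 1) else 0)
            - (1/2 * g y) * (Dκ (Pi.single m 1) * y m)
            - κ y * (1/2 * g y)
            - (κ y * (1/2)) * (Dg (Pi.single m 1) * y m)) := by
          refine Finset.sum_congr rfl fun m _ => ?_
          rw [hterm m, hsplit m]
      _ = (E y * Dκ (Pi.single j 1) + κ y * DE (Pi.single j 1))
            - 0 - (n : ℝ) * (κ y * (1/2 * g y))
            - (κ y * (1/2)) * DE (Pi.single j 1) := by
          rw [Finset.sum_sub_distrib, Finset.sum_sub_distrib, Finset.sum_sub_distrib,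
            s1, s2, s3, s4]
      _ = fderiv ℝ κ y (Pi.single j 1) * E y
            + ((1 - (n : ℝ)) / 2) * (κ y * fderiv ℝ E y (Pi.single j 1)) := by
          rw [hgy, ← hDκ, ← hDE]; ring
  constructor
  · intro H y hy j
    have h := H y hy j
    rw [LHSval y hy j, RHSval y hy j] at h
    have hE0 : 0 < E y := pow_pos (hFpos y hy) 2
    have key : ((n : ℝ) + 1) * (fderiv ℝ κ y (Pi.single j 1) * E y) = 0 := by
      linear_combination 2 * h
    have hne : ((n : ℝ) + 1) ≠ 0 := by positivity
    have hab : fderiv ℝ κ y (Pi.single j 1) * E y = 0 :=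
      (mul_eq_zero.mp key).resolve_left hne
    exact (mul_eq_zero.mp hab).resolve_right hE0.ne'
  · intro H y hy j
    rw [LHSval y hy j, RHSval y hy j, H y hy j]
    ring
end

section
/- Let n ≥ 3 and let g, h : Fin n → Fin n → ℝ with g symmetric and invertible (as a matrix) and h symmetric. If g i k * h j l - g i l * h j k + g j k * h i l - g j l * h i k = 0 for all i, j, k, l (i.e., the Kulkarni–Nomizu type combination vanishes), then h = λ • g for some λ ∈ ℝ. -/
theorem stmt_16 (n : ℕ) (hn : 3 ≤ n) (g h : Fin n → Fin n → ℝ)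
    (hg_symm : ∀ i j, g i j = g j i)
    (hg_inv : IsUnit (Matrix.of fun i j => g i j))
    (hh_symm : ∀ i j, h i j = h j i)
    (hKN : ∀ i j k l : Fin n,
      g i k * h j l - g i l * h j k + g j k * h i l - g j l * h i k = 0) :
    ∃ lam : ℝ, ∀ i j, h i j = lam * g i j := by
  classical
  set M : Matrix (Fin n) (Fin n) ℝ := Matrix.of fun i j => g i j with hM
  have hdet : IsUnit M.det := (Matrix.isUnit_iff_isUnit_det M).mp hg_inv
  set A : Matrix (Fin n) (Fin n) ℝ := M⁻¹ with hA
  have hAM : A * M = 1 := Matrix.nonsing_inv_mul M hdet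
  have hMA : M * A = 1 := Matrix.mul_nonsing_inv M hdet
  set t : ℝ := ∑ k, ∑ i, A k i * h i k with ht
  have hn0 : (n : ℝ) ≠ 0 := by
    have : 0 < n := lt_of_lt_of_le (by norm_num) hn
    exact_mod_cast this.ne'
  refine ⟨t / n, fun j l => ?_⟩
  have S1 : ∑ k, ∑ i, A k i * (g i k * h j l) = (n : ℝ) * h j l := by
    have h1 : ∑ k, ∑ i, A k i * g i k = (n : ℝ) := by
      have h2 : (A * M).trace = ∑ k, ∑ i, A k i * g i k := by
        simp [Matrix.trace, Matrix.mul_apply, Matrix.diag, hM]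
      rw [hAM, Matrix.trace_one] at h2
      simpa using h2.symm
    calc ∑ k, ∑ i, A k i * (g i k * h j l)
        = (∑ k, ∑ i, A k i * g i k) * h j l := by
          rw [Finset.sum_mul]
          exact Finset.sum_congr rfl fun k _ => by rw [Finset.sum_mul]; exact Finset.sum_congr rfl fun i _ => by ring
      _ = (n : ℝ) * h j l := by rw [h1]
  have S2 : ∑ k, ∑ i, A k i * (g i l * h j k) = h j l := by
    have h2 : ∀ k, ∑ i, A k i * (g i l * h j k) = (A * M) k l * h j k := by
      intro k
      rw [Matrix.mul_apply, Finset.sum_mul]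
      exact Finset.sum_congr rfl fun i _ => by simp [hM]; ring
    simp only [h2, hAM, Matrix.one_apply]
    simp
  have S3 : ∑ k, ∑ i, A k i * (g j k * h i l) = h j l := by
    rw [Finset.sum_comm]
    have h3 : ∀ i, ∑ k, A k i * (g j k * h i l) = (M * A) j i * h i l := by
      intro i
      rw [Matrix.mul_apply, Finset.sum_mul]
      exact Finset.sum_congr rfl fun k _ => by simp [hM]; ring
    simp only [h3, hMA, Matrix.one_apply]
    simp
  have S4 : ∑ k, ∑ i, A k i * (g j l * h i k) = g j l * t := by
    rw [ht, Finset.mul_sum]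
    refine Finset.sum_congr rfl fun k _ => ?_
    rw [Finset.mul_sum]
    exact Finset.sum_congr rfl fun i _ => by ring
  have h0 : ∑ k, ∑ i, A k i * (g i k * h j l - g i l * h j k + g j k * h i l - g j l * h i k) = 0 := by
    simp [hKN]
  have hexp : ∑ k, ∑ i, A k i * (g i k * h j l - g i l * h j k + g j k * h i l - g j l * h i k)
      = (∑ k, ∑ i, A k i * (g i k * h j l)) - (∑ k, ∑ i, A k i * (g i l * h j k))
        + (∑ k, ∑ i, A k i * (g j k * h i l)) - (∑ k, ∑ i, A k i * (g j l * h i k)) := by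
    simp only [mul_sub, mul_add, Finset.sum_sub_distrib, Finset.sum_add_distrib]
  rw [hexp, S1, S2, S3, S4] at h0
  have : (n : ℝ) * h j l = g j l * t := by linarith
  field_simp
  linarith [this]
end
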